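/- Let φ be a formula of TL[#←,Y,MOD] of depth at most k over the alphabet Σ ∪ {e}, where e ∉ Σ. Then there exist an integer x ≥ 1 and a TL[#←] formula φ' of depth at most k over Σ such that, defining the mapping f : Σ* → (Σ ∪ {e})* by f(w1 w2 ⋯ wn) = e^x w1 e^{x−1} w2 e^{x−1} ⋯ wn e^{x−1}, for all nonempty w ∈ Σ*: f(w) ⊨ φ if and only if w ⊨ φ'. -/

import Mathlib

mutual
  /-- Formulas of TL[#←,Y,MOD]: TL with counting, the previous-position operator `Y`,
  and the positional predicates `MOD_m^r`. -/
  inductive YFormula (σ : Type) : Type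
    | sym : σ → YFormula σ
    | mod : ℕ → ℕ → YFormula σ
    | yop : YFormula σ → YFormula σ
    | lt : YTerm σ → YTerm σ → YFormula σ
    | not : YFormula σ → YFormula σ
    | and : YFormula σ → YFormula σ → YFormula σ
  /-- Terms of TL[#←,Y,MOD]. -/
  inductive YTerm (σ : Type) : Type
    | countL : YFormula σ → YTerm σ
    | add : YTerm σ → YTerm σ → YTerm σ
    | one : YTerm σ
end

mutual
  /-- Satisfaction `w,i ⊨ φ` (positions are 0-indexed, `0 ≤ i < |w|`):
  `MOD_m^r` holds at the (1-indexed) position `i+1` iff `i+1 ≡ r (mod m)`, and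
  `Yφ` holds at position `i` iff `i > 0` and `φ` holds at position `i−1`. -/
  def YFormula.sat {σ : Type} [DecidableEq σ] : YFormula σ → List σ → ℕ → Bool
    | .sym c, w, i => decide (w[i]? = some c)
    | .mod m r, _, i => decide ((i + 1) % m = r % m)
    | .yop φ, w, i => decide (0 < i) && YFormula.sat φ w (i - 1)
    | .lt t₁ t₂, w, i => decide (YTerm.val t₁ w i < YTerm.val t₂ w i)
    | .not φ, w, i => !(YFormula.sat φ w i)
    | .and φ₁ φ₂, w, i => YFormula.sat φ₁ w i && YFormula.sat φ₂ w i
  /-- Value `t^{w,i}` of a term; `#←[φ]^{w,i}` counts positions `j ≤ i` with `w,j ⊨ φ`. -/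
  def YTerm.val {σ : Type} [DecidableEq σ] : YTerm σ → List σ → ℕ → ℕ
    | .countL φ, w, i => ((List.range (i + 1)).filter (fun j => YFormula.sat φ w j)).length
    | .add t₁ t₂, w, i => YTerm.val t₁ w i + YTerm.val t₂ w i
    | .one, _, _ => 1
end

mutual
  /-- Nesting depth of `#←` in a formula (`Y` and `MOD` do not count). -/
  def YFormula.depth {σ : Type} : YFormula σ → ℕ
    | .sym _ => 0
    | .mod _ _ => 0
    | .yop φ => YFormula.depth φ
    | .lt t₁ t₂ => max (YTerm.depth t₁) (YTerm.depth t₂)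
    | .not φ => YFormula.depth φ
    | .and φ₁ φ₂ => max (YFormula.depth φ₁) (YFormula.depth φ₂)
  /-- Nesting depth of `#←` in a term. -/
  def YTerm.depth {σ : Type} : YTerm σ → ℕ
    | .countL φ => YFormula.depth φ + 1
    | .add t₁ t₂ => max (YTerm.depth t₁) (YTerm.depth t₂)
    | .one => 0
end

/-- A formula of the form `Y^c Q_σ` or `Y^c MOD_m^r` for some `c ≥ 0`. -/
def YFormula.isYAtom {σ : Type} : YFormula σ → Prop
  | .sym _ => True
  | .mod _ _ => True
  | .yop φ => YFormula.isYAtom φ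
  | _ => False

mutual
  /-- `Y`-normal form: the operator `Y` is only applied (iterated) to the atomic
  formulas `Q_σ` and `MOD_m^r`. -/
  def YFormula.inYNF {σ : Type} : YFormula σ → Prop
    | .sym _ => True
    | .mod _ _ => True
    | .yop φ => YFormula.isYAtom φ
    | .lt t₁ t₂ => YTerm.inYNF t₁ ∧ YTerm.inYNF t₂
    | .not φ => YFormula.inYNF φ
    | .and φ₁ φ₂ => YFormula.inYNF φ₁ ∧ YFormula.inYNF φ₂
  /-- `Y`-normal form for terms. -/
  def YTerm.inYNF {σ : Type} : YTerm σ → Prop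
    | .countL φ => YFormula.inYNF φ
    | .add t₁ t₂ => YTerm.inYNF t₁ ∧ YTerm.inYNF t₂
    | .one => True
end


mutual
  /-- Formulas of TL[#←]. -/
  inductive TLFormula (σ : Type) : Type
    | sym : σ → TLFormula σ
    | lt : TLTerm σ → TLTerm σ → TLFormula σ
    | not : TLFormula σ → TLFormula σ
    | and : TLFormula σ → TLFormula σ → TLFormula σ
  /-- Terms of TL[#←]. -/
  inductive TLTerm (σ : Type) : Type
    | countL : TLFormula σ → TLTerm σ
    | add : TLTerm σ → TLTerm σ → TLTerm σ
    | one : TLTerm σ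
end

mutual
  /-- Satisfaction `w,i ⊨ φ` (positions are 0-indexed, `0 ≤ i < |w|`). -/
  def TLFormula.sat {σ : Type} [DecidableEq σ] : TLFormula σ → List σ → ℕ → Bool
    | .sym c, w, i => decide (w[i]? = some c)
    | .lt t₁ t₂, w, i => decide (TLTerm.val t₁ w i < TLTerm.val t₂ w i)
    | .not φ, w, i => !(TLFormula.sat φ w i)
    | .and φ₁ φ₂, w, i => TLFormula.sat φ₁ w i && TLFormula.sat φ₂ w i
  /-- Value `t^{w,i}` of a term; `#←[φ]^{w,i}` counts positions `j ≤ i` with `w,j ⊨ φ`. -/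
  def TLTerm.val {σ : Type} [DecidableEq σ] : TLTerm σ → List σ → ℕ → ℕ
    | .countL φ, w, i => ((List.range (i + 1)).filter (fun j => TLFormula.sat φ w j)).length
    | .add t₁ t₂, w, i => TLTerm.val t₁ w i + TLTerm.val t₂ w i
    | .one, _, _ => 1
end

mutual
  /-- Nesting depth of `#←` in a formula. -/
  def TLFormula.depth {σ : Type} : TLFormula σ → ℕ
    | .sym _ => 0
    | .lt t₁ t₂ => max (TLTerm.depth t₁) (TLTerm.depth t₂)
    | .not φ => TLFormula.depth φ
    | .and φ₁ φ₂ => max (TLFormula.depth φ₁) (TLFormula.depth φ₂)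
  /-- Nesting depth of `#←` in a term. -/
  def TLTerm.depth {σ : Type} : TLTerm σ → ℕ
    | .countL φ => TLFormula.depth φ + 1
    | .add t₁ t₂ => max (TLTerm.depth t₁) (TLTerm.depth t₂)
    | .one => 0
end

/-- `φ` defines `L`: a nonempty string is in `L` iff `φ` is satisfied at its last position. -/
def TLFormula.defines {σ : Type} [DecidableEq σ] (φ : TLFormula σ) (L : Set (List σ)) : Prop :=
  ∀ w : List σ, w ≠ [] → (w ∈ L ↔ φ.sat w (w.length - 1) = true)


/-- The padding map `f(w₁w₂⋯wₙ) = e^x w₁ e^{x−1} w₂ e^{x−1} ⋯ wₙ e^{x−1}`, where the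
neutral symbol `e ∉ Σ` is represented by `none` in the alphabet `Option σ`. -/
def fembed {σ : Type} (x : ℕ) (w : List σ) : List (Option σ) :=
  List.replicate x none ++
    (w.map (fun c => some c :: List.replicate (x - 1) (none : Option σ))).flatten

/-!
Read under `c` applications of `Y`, a formula is evaluated `c` positions back. Take the
period `x` of the padding larger than all these shifts and than the residues `r` of the
predicates `MOD_0^r`, and divisible by all other moduli. Then, at offset `s` of block `q + 1`
of `f(w)`, every atom `Y^c Q_a` or `Y^c MOD_m^r` has the truth value of a fixed TL[#←] formula
of depth 0 at position `q` of `w`: letters only stand at offset 0, and the modulo predicates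
only see the offset. For a count `#←[χ]` the positions split into the first block, which
contributes a constant, and for each offset `s'` the positions of the later blocks, which
contribute the count up to `q` of the translation of `χ` at offset `s'`, except that the
offsets after `s` of the current block are not reached yet. They are added as a correction:
the number of formulas in a fixed list holding at `q`. A comparison `t₁ < t₂` absorbs the
corrections of both sides by a case distinction over which of these formulas hold.
-/

namespace Nat

theorem count_congr {p q : ℕ → Prop} [DecidablePred p] [DecidablePred q] {n : ℕ}
    (h : ∀ k < n, p k ↔ q k) : count p n = count q n := by
  simp only [count_eq_card_filter_range]
  exact congrArg Finset.card (Finset.filter_congr fun k hk => h k (Finset.mem_range.mp hk))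

theorem count_shift (p : ℕ → Prop) [DecidablePred p] (c n : ℕ) :
    count (fun j => c ≤ j ∧ p (j - c)) (c + n) = count p n := by
  rw [count_add, count_of_forall_not fun j hj h => by omega, zero_add]
  simp

theorem count_mul_eq_sum (p : ℕ → Prop) [DecidablePred p] (x q : ℕ) :
    count p (q * x) = ∑ s ∈ Finset.range x, count (fun Q => p (Q * x + s)) q := by
  induction q with
  | zero => simp
  | succ q ih =>
    rw [add_one_mul, count_add, ih, count_eq_card_filter_range, Finset.card_filter,
      ← Finset.sum_add_distrib]
    simp only [count_succ, add_comm]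

/-- `p` read in blocks of length `x` after a first one: counting up to offset `s` of block
`q + 1`, then the rest of that block. -/
theorem count_add_count_eq_sum {p : ℕ → Prop} [DecidablePred p] {B : ℕ → ℕ → Prop}
    [∀ s, DecidablePred (B s)] {x q s : ℕ} (hs : s < x)
    (hB : ∀ s' < x, ∀ Q ≤ q, p ((Q + 1) * x + s') ↔ B s' Q) :
    count p ((q + 1) * x + s + 1) + count (fun j => B (s + 1 + j) q) (x - (s + 1)) =
      count p x + ∑ s' ∈ Finset.range x, count (B s') (q + 1) := by
  have htail : count (fun j => B (s + 1 + j) q) (x - (s + 1)) =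
      count (fun j => p ((q + 1) * x + s + 1 + j)) (x - (s + 1)) :=
    count_congr fun j hj => by rw [← hB (s + 1 + j) (by omega) q le_rfl]; ring_nf
  have hsplit : (q + 1) * x + s + 1 + (x - (s + 1)) = x + (q + 1) * x := by
    rw [add_one_mul]; omega
  rw [htail, ← count_add, hsplit, count_add, count_mul_eq_sum]
  congr 1
  refine Finset.sum_congr rfl fun s' hs' => count_congr fun Q hQ => ?_
  rw [← hB s' (Finset.mem_range.mp hs') Q (by omega)]
  ring_nf

end Nat

namespace TLTerm

variable {σ : Type}

theorem val_countL [DecidableEq σ] (φ : TLFormula σ) (w : List σ) (i : ℕ) :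
    (countL φ).val w i = Nat.count (fun j => φ.sat w j) (i + 1) := by
  simp [val, Nat.count, List.countP_eq_length_filter]

/-- `t₁ + ⋯ + tₙ + 1`: terms have no zero. -/
def succSum (l : List (TLTerm σ)) : TLTerm σ := l.foldr add one

theorem val_succSum [DecidableEq σ] (l : List (TLTerm σ)) (w : List σ) (i : ℕ) :
    (succSum l).val w i = (l.map (·.val w i)).sum + 1 := by
  induction l with
  | nil => rfl
  | cons t l ih =>
    simp only [succSum, List.foldr_cons, val, List.map_cons, List.sum_cons] at ih ⊢
    omega

theorem depth_succSum_le {l : List (TLTerm σ)} {m : ℕ} (h : ∀ t ∈ l, t.depth ≤ m) :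
    (succSum l).depth ≤ m := by
  induction l with
  | nil => exact Nat.zero_le m
  | cons t l ih => exact max_le (h t (by simp)) (ih fun u hu => h u (by simp [hu]))

end TLTerm

namespace TLFormula

variable {σ : Type}

def const : Bool → TLFormula σ
  | false => .lt .one .one
  | true => .not (.lt .one .one)

@[simp] theorem sat_const [DecidableEq σ] (b : Bool) (w : List σ) (i : ℕ) :
    (const b).sat w i = b := by
  cases b <;> simp [const, sat, TLTerm.val]

@[simp] theorem depth_const (b : Bool) : (const b : TLFormula σ).depth = 0 := by
  cases b <;> rfl

def ite (χ φ ψ : TLFormula σ) : TLFormula σ :=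
  .not (.and (.not (.and χ φ)) (.not (.and (.not χ) ψ)))

theorem sat_ite [DecidableEq σ] (χ φ ψ : TLFormula σ) (w : List σ) (i : ℕ) :
    (ite χ φ ψ).sat w i = if χ.sat w i then φ.sat w i else ψ.sat w i := by
  cases h : χ.sat w i <;> simp [ite, sat, h]

theorem depth_ite (χ φ ψ : TLFormula σ) :
    (ite χ φ ψ).depth = max χ.depth (max φ.depth ψ.depth) := by
  simp only [ite, depth]
  omega

def ltAdd : List (TLFormula σ) → List (TLFormula σ) → TLTerm σ → TLTerm σ → TLFormula σ
  | χ :: l₁, l₂, u, v => ite χ (ltAdd l₁ l₂ (u.add .one) v) (ltAdd l₁ l₂ u v)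
  | [], χ :: l₂, u, v => ite χ (ltAdd [] l₂ u (v.add .one)) (ltAdd [] l₂ u v)
  | [], [], u, v => .lt u v

theorem sat_ltAdd [DecidableEq σ] (l₁ l₂ : List (TLFormula σ)) (u v : TLTerm σ) (w : List σ)
    (i : ℕ) :
    (ltAdd l₁ l₂ u v).sat w i =
      decide (u.val w i + l₁.countP (·.sat w i) < v.val w i + l₂.countP (·.sat w i)) := by
  induction l₁, l₂, u, v using ltAdd.induct with
  | case1 χ l₁ l₂ u v ih₁ ih₂ | case2 χ l₂ u v ih₁ ih₂ =>
    rw [ltAdd, sat_ite, ih₁, ih₂]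
    cases h : χ.sat w i <;> simp [h, TLTerm.val, Nat.add_right_comm _ 1, ← Nat.add_assoc]
  | case3 u v => simp [ltAdd, sat]

theorem depth_ltAdd_le {l₁ l₂ : List (TLFormula σ)} {u v : TLTerm σ} {m : ℕ}
    (h₁ : ∀ χ ∈ l₁, χ.depth ≤ m) (h₂ : ∀ χ ∈ l₂, χ.depth ≤ m) (hu : u.depth ≤ m)
    (hv : v.depth ≤ m) : (ltAdd l₁ l₂ u v).depth ≤ m := by
  induction l₁, l₂, u, v using ltAdd.induct <;>
    simp_all [ltAdd, depth_ite, depth, TLTerm.depth]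

end TLFormula

theorem YTerm.val_countL {τ : Type} [DecidableEq τ] (φ : YFormula τ) (w : List τ) (i : ℕ) :
    (YTerm.countL φ).val w i = Nat.count (fun j => φ.sat w j) (i + 1) := by
  simp [YTerm.val, Nat.count, List.countP_eq_length_filter]

mutual

theorem YFormula.sat_congr_prefix {τ : Type} [DecidableEq τ] (φ : YFormula τ)
    {w w' : List τ} {i : ℕ} (h : ∀ j ≤ i, w[j]? = w'[j]?) : φ.sat w i = φ.sat w' i := by
  cases φ with
  | sym a => simp only [YFormula.sat, h i le_rfl]
  | mod m r => rfl
  | yop φ => simp only [YFormula.sat, φ.sat_congr_prefix (i := i - 1) fun j hj => h j (by omega)]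
  | lt t₁ t₂ => simp only [YFormula.sat, t₁.val_congr_prefix h, t₂.val_congr_prefix h]
  | not φ => simp only [YFormula.sat, φ.sat_congr_prefix h]
  | and φ₁ φ₂ => simp only [YFormula.sat, φ₁.sat_congr_prefix h, φ₂.sat_congr_prefix h]

theorem YTerm.val_congr_prefix {τ : Type} [DecidableEq τ] (t : YTerm τ)
    {w w' : List τ} {i : ℕ} (h : ∀ j ≤ i, w[j]? = w'[j]?) : t.val w i = t.val w' i := by
  cases t with
  | countL φ =>
    simp only [YTerm.val_countL]
    exact Nat.count_congr fun j hj => by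
      rw [φ.sat_congr_prefix fun k hk => h k (by omega)]
  | add t₁ t₂ => simp only [YTerm.val, t₁.val_congr_prefix h, t₂.val_congr_prefix h]
  | one => rfl

end

/- `φ.Fits x c`: read under `c` further applications of `Y`, no chain of `Y`s in `φ` reaches
back a whole block of length `x`, and every `MOD_m^r` is blind to shifts by multiples of `x`
(`m ∣ x`), or, when `m = 0`, can only hold in the first block. -/
mutual

def YFormula.Fits {τ : Type} (x : ℕ) : ℕ → YFormula τ → Prop
  | c, .sym _ => c < x
  | c, .mod m r => c < x ∧ if m = 0 then r + c < x else m ∣ x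
  | c, .yop φ => c < x ∧ φ.Fits x (c + 1)
  | c, .lt t₁ t₂ => t₁.Fits x c ∧ t₂.Fits x c
  | c, .not φ => φ.Fits x c
  | c, .and φ₁ φ₂ => φ₁.Fits x c ∧ φ₂.Fits x c

def YTerm.Fits {τ : Type} (x : ℕ) : ℕ → YTerm τ → Prop
  | c, .countL φ => c < x ∧ φ.Fits x c
  | c, .add t₁ t₂ => t₁.Fits x c ∧ t₂.Fits x c
  | _, .one => True

end

def HoldsForLargeMultiples (P : ℕ → Prop) : Prop :=
  ∃ N, 0 < N ∧ ∃ L, ∀ x, N ∣ x → L < x → P x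

namespace HoldsForLargeMultiples

theorem of_lt (L : ℕ) : HoldsForLargeMultiples (L < ·) :=
  ⟨1, one_pos, L, fun _ _ h => h⟩

theorem dvd {N : ℕ} (hN : 0 < N) : HoldsForLargeMultiples (N ∣ ·) :=
  ⟨N, hN, 0, fun _ h _ => h⟩

theorem trivial : HoldsForLargeMultiples fun _ => True :=
  ⟨1, one_pos, 0, fun _ _ _ => True.intro⟩

theorem and {P Q : ℕ → Prop} (hP : HoldsForLargeMultiples P)
    (hQ : HoldsForLargeMultiples Q) : HoldsForLargeMultiples fun x => P x ∧ Q x := by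
  obtain ⟨N₁, hN₁, L₁, h₁⟩ := hP
  obtain ⟨N₂, hN₂, L₂, h₂⟩ := hQ
  exact ⟨N₁ * N₂, Nat.mul_pos hN₁ hN₂, max L₁ L₂, fun x hx hL =>
    ⟨h₁ x (dvd_of_mul_right_dvd hx) (by omega), h₂ x (dvd_of_mul_left_dvd hx) (by omega)⟩⟩

theorem exists_pos {P : ℕ → Prop} (h : HoldsForLargeMultiples P) : ∃ x, 0 < x ∧ P x := by
  obtain ⟨N, hN, L, hP⟩ := h
  exact ⟨N * (L + 1), by positivity, hP _ (dvd_mul_right N _) (by nlinarith)⟩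

end HoldsForLargeMultiples

mutual

theorem YFormula.holdsForLargeMultiples_fits {τ : Type} (φ : YFormula τ) (c : ℕ) :
    HoldsForLargeMultiples (φ.Fits · c) := by
  cases φ with
  | sym a => exact .of_lt c
  | mod m r =>
    by_cases hm : m = 0
    · simpa [YFormula.Fits, hm] using (HoldsForLargeMultiples.of_lt c).and (.of_lt (r + c))
    · simpa [YFormula.Fits, hm] using (HoldsForLargeMultiples.of_lt c).and (.dvd (by omega))
  | yop φ => exact (HoldsForLargeMultiples.of_lt c).and (φ.holdsForLargeMultiples_fits (c + 1))
  | lt t₁ t₂ =>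
    exact (t₁.holdsForLargeMultiples_fits c).and (t₂.holdsForLargeMultiples_fits c)
  | not φ => exact φ.holdsForLargeMultiples_fits c
  | and φ₁ φ₂ =>
    exact (φ₁.holdsForLargeMultiples_fits c).and (φ₂.holdsForLargeMultiples_fits c)

theorem YTerm.holdsForLargeMultiples_fits {τ : Type} (t : YTerm τ) (c : ℕ) :
    HoldsForLargeMultiples (t.Fits · c) := by
  cases t with
  | countL φ => exact (HoldsForLargeMultiples.of_lt c).and (φ.holdsForLargeMultiples_fits c)
  | add t₁ t₂ =>
    exact (t₁.holdsForLargeMultiples_fits c).and (t₂.holdsForLargeMultiples_fits c)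
  | one => exact .trivial

end

theorem List.getElem?_flatten_mul_add {α : Type*} {L : List (List α)} {x : ℕ}
    (hL : ∀ l ∈ L, l.length = x) (q : ℕ) {s : ℕ} (hs : s < x) :
    L.flatten[q * x + s]? = L[q]?.bind (·[s]?) := by
  induction L generalizing q with
  | nil => simp
  | cons l L ih =>
    have hl : l.length = x := hL l (by simp)
    cases q with
    | zero => simp [List.getElem?_append_left (hl ▸ hs : s < l.length)]
    | succ q =>
      rw [List.flatten_cons, show (q + 1) * x + s = l.length + (q * x + s) by rw [hl]; ring,
        List.getElem?_append_right (by omega), Nat.add_sub_cancel_left,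
        ih (fun l' hl' => hL l' (by simp [hl'])) q]
      simp

section Fembed

variable {σ : Type} {x : ℕ}

theorem fembed_eq_flatten (w : List σ) :
    fembed x w =
      (List.replicate x none :: w.map fun a => some a :: List.replicate (x - 1) none).flatten :=
  rfl

theorem fembed_getElem?_mul_add (w : List σ) (q : ℕ) {s : ℕ} (hs : s < x) :
    (fembed x w)[q * x + s]? =
      (List.replicate x none :: w.map fun a => some a :: List.replicate (x - 1) none)[q]?.bind
        (·[s]?) := by
  rw [fembed_eq_flatten, List.getElem?_flatten_mul_add _ q hs]
  simp only [List.mem_cons, List.mem_map]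
  rintro l (rfl | ⟨a, -, rfl⟩) <;> simp; omega

theorem fembed_getElem?_of_lt (w : List σ) {j : ℕ} (hj : j < x) :
    (fembed x w)[j]? = some none := by
  simpa [List.getElem?_replicate, hj] using fembed_getElem?_mul_add w 0 hj

theorem fembed_getElem?_succ_mul_add (w : List σ) (q : ℕ) {s : ℕ} (hs : s < x) :
    (fembed x w)[(q + 1) * x + s]? = w[q]?.map fun a => if s = 0 then some a else none := by
  rw [fembed_getElem?_mul_add w (q + 1) hs]
  simp only [List.getElem?_cons_succ, List.getElem?_map]
  cases w[q]? <;> rcases s with _ | s <;> simp [List.getElem?_replicate]; omega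

theorem fembed_getElem?_sub {w : List σ} {q c s : ℕ} (hq : q < w.length) (hc : c < x)
    (hs : s < x) :
    (fembed x w)[(q + 1) * x + s - c]? = some (if s = c then some w[q] else none) := by
  rcases le_or_gt c s with hcs | hsc
  · rw [Nat.add_sub_assoc hcs, fembed_getElem?_succ_mul_add w q (by omega)]
    simp only [List.getElem?_eq_getElem hq, Option.map_some]
    split_ifs <;> first | rfl | omega
  · rw [if_neg hsc.ne]
    rcases q with _ | q
    · exact fembed_getElem?_of_lt w (by omega)
    · rw [show (q + 1 + 1) * x + s - c = (q + 1) * x + (x + s - c) by rw [add_one_mul]; omega,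
        fembed_getElem?_succ_mul_add w q (by omega), List.getElem?_eq_getElem (by omega)]
      simp; omega

theorem length_fembed (w : List σ) (hx : 0 < x) : (fembed x w).length = (w.length + 1) * x := by
  simp [fembed, Function.comp_def, Nat.sub_add_cancel hx]
  ring

end Fembed

section Translation

variable {σ : Type} [DecidableEq σ] {x : ℕ}

theorem YFormula.sat_mod_of_fits {τ : Type} [DecidableEq τ] {m r c : ℕ}
    (h : (YFormula.mod m r : YFormula τ).Fits x c) (w : List τ) (q s : ℕ) :
    (YFormula.mod m r).sat w ((q + 1) * x + s - c) = decide ((x + s - c + 1) % m = r % m) := by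
  obtain ⟨hc, hm⟩ := h
  rw [YFormula.sat, show (q + 1) * x + s - c + 1 = q * x + (x + s - c + 1) by
    rw [add_one_mul]; omega]
  split_ifs at hm with hm0
  · subst hm0
    simp only [Nat.mod_zero, decide_eq_decide]
    omega
  · obtain ⟨k, rfl⟩ := hm
    rw [show q * (m * k) = m * (q * k) by ring, Nat.mul_add_mod]

theorem YFormula.sat_sym_fembed {a : Option σ} {w : List σ} {q c s : ℕ} (hq : q < w.length)
    (hc : c < x) (hs : s < x) :
    (YFormula.sym a).sat (fembed x w) ((q + 1) * x + s - c) =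
      (if s = c then a.elim (.const false) .sym else .const a.isNone : TLFormula σ).sat w q := by
  rw [YFormula.sat, fembed_getElem?_sub hq hc hs]
  split_ifs <;> cases a <;> simp [TLFormula.sat, List.getElem?_eq_getElem hq]

theorem YTerm.val_countL_fembed_add_count {χ : YFormula (Option σ)} {T : ℕ → TLFormula σ}
    {w : List σ} {q c s : ℕ} (hq : q < w.length) (hc : c < x) (hs : s < x)
    (hT : ∀ s' < x, ∀ Q < w.length,
      χ.sat (fembed x w) ((Q + 1) * x + s' - c) = (T s').sat w Q) :
    (YTerm.countL χ).val (fembed x w) ((q + 1) * x + s - c) +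
        Nat.count (fun j => (T (s + 1 + j)).sat w q) (x - (s + 1)) =
      Nat.count (fun j => c ≤ j ∧ χ.sat (fembed x ([] : List σ)) (j - c)) x +
        ∑ s' ∈ Finset.range x, (TLTerm.countL (T s')).val w q := by
  have hx : x ≤ (q + 1) * x := Nat.le_mul_of_pos_left x q.succ_pos
  have hval : (YTerm.countL χ).val (fembed x w) ((q + 1) * x + s - c) =
      Nat.count (fun j => c ≤ j ∧ χ.sat (fembed x w) (j - c)) ((q + 1) * x + s + 1) := by
    rw [YTerm.val_countL, ← Nat.count_shift]
    congr 1
    omega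
  have hfirst : Nat.count (fun j => c ≤ j ∧ χ.sat (fembed x w) (j - c)) x =
      Nat.count (fun j => c ≤ j ∧ χ.sat (fembed x ([] : List σ)) (j - c)) x :=
    Nat.count_congr fun j hj => by
      rw [χ.sat_congr_prefix (w' := fembed x []) fun k hk => by
        rw [fembed_getElem?_of_lt w (by omega), fembed_getElem?_of_lt [] (by omega)]]
  rw [hval, Nat.count_add_count_eq_sum hs (B := fun s' Q => (T s').sat w Q), hfirst]
  · simp [TLTerm.val_countL]
  · intro s' hs' Q hQ
    have : x ≤ (Q + 1) * x := Nat.le_mul_of_pos_left x Q.succ_pos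
    simp only [hT s' hs' Q (by omega), and_iff_right_iff_imp]
    omega

theorem YTerm.exists_translation_countL {χ : YFormula (Option σ)} {c s : ℕ} (hc : c < x)
    (hs : s < x) (hχ : ∀ s' < x, ∃ T : TLFormula σ, T.depth ≤ χ.depth ∧ ∀ w : List σ,
      ∀ Q < w.length, χ.sat (fembed x w) ((Q + 1) * x + s' - c) = T.sat w Q) :
    ∃ (u : TLTerm σ) (corr : List (TLFormula σ)), u.depth ≤ (YTerm.countL χ).depth ∧
      (∀ ψ ∈ corr, ψ.depth ≤ (YTerm.countL χ).depth) ∧ ∀ w : List σ, ∀ q < w.length,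
        (YTerm.countL χ).val (fembed x w) ((q + 1) * x + s - c) + corr.countP (·.sat w q) =
          u.val w q := by
  have H : ∀ s', ∃ T : TLFormula σ, T.depth ≤ χ.depth ∧ (s' < x → ∀ w : List σ,
      ∀ Q < w.length, χ.sat (fembed x w) ((Q + 1) * x + s' - c) = T.sat w Q) := fun s' =>
    if hs' : s' < x then (hχ s' hs').imp fun _ h => ⟨h.1, fun _ => h.2⟩
    else ⟨.const false, by simp, fun h => absurd h hs'⟩
  choose T hTd hT using H
  refine ⟨.succSum ((List.range x).map (fun s' => .countL (T s')) ++
      List.replicate (Nat.count (fun j => c ≤ j ∧ χ.sat (fembed x ([] : List σ)) (j - c)) x)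
        .one),
    .const true :: (List.range (x - (s + 1))).map (fun j => T (s + 1 + j)), ?_, ?_, ?_⟩
  · refine TLTerm.depth_succSum_le fun u hu => ?_
    simp only [List.mem_append, List.mem_map, List.mem_replicate] at hu
    rcases hu with ⟨s', -, rfl⟩ | ⟨-, rfl⟩
    · exact Nat.succ_le_succ (hTd s')
    · exact Nat.zero_le _
  · simp only [List.mem_cons, List.mem_map]
    rintro _ (rfl | ⟨j, -, rfl⟩)
    · simp
    · exact (hTd _).trans (Nat.le_succ _)
  · intro w q hq
    have hsum : ((List.range x).map fun s' => (TLTerm.countL (T s')).val w q).sum =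
        ∑ s' ∈ Finset.range x, (TLTerm.countL (T s')).val w q := by
      rw [Finset.sum_eq_multiset_sum]; rfl
    have hcorr : ((List.range (x - (s + 1))).map fun j => T (s + 1 + j)).countP (·.sat w q) =
        Nat.count (fun j => (T (s + 1 + j)).sat w q) (x - (s + 1)) := by
      simp [Nat.count, List.countP_map, Function.comp_def]
    rw [TLTerm.val_succSum, List.map_append, List.map_map, List.sum_append, List.map_replicate,
      List.sum_replicate, List.countP_cons, hcorr]
    have key := YTerm.val_countL_fembed_add_count hq hc hs fun s' hs' => hT s' hs' w
    simp only [Function.comp_def, TLFormula.sat_const, if_true] at key ⊢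
    rw [hsum, show (TLTerm.one : TLTerm σ).val w q = 1 from rfl, smul_eq_mul, mul_one]
    omega

mutual

theorem YFormula.exists_translation (φ : YFormula (Option σ)) {c s : ℕ} (hφ : φ.Fits x c)
    (hs : s < x) :
    ∃ T : TLFormula σ, T.depth ≤ φ.depth ∧
      ∀ w : List σ, ∀ q < w.length, φ.sat (fembed x w) ((q + 1) * x + s - c) = T.sat w q := by
  cases φ with
  | sym a =>
    exact ⟨_, by split_ifs <;> cases a <;> simp [TLFormula.depth],
      fun w q hq => YFormula.sat_sym_fembed hq hφ hs⟩
  | mod m r => exact ⟨.const _, by simp, fun w q _ => by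
    rw [TLFormula.sat_const, YFormula.sat_mod_of_fits hφ]⟩
  | yop φ =>
    obtain ⟨hc, hφ⟩ := hφ
    obtain ⟨T, hT, hsat⟩ := φ.exists_translation hφ hs
    refine ⟨T, hT, fun w q hq => ?_⟩
    have hx : x ≤ (q + 1) * x := Nat.le_mul_of_pos_left x q.succ_pos
    rw [YFormula.sat, ← hsat w q hq, Nat.sub_sub]
    simp only [Bool.and_eq_right_iff_imp, decide_eq_true_eq]
    omega
  | lt t₁ t₂ =>
    obtain ⟨u₁, corr₁, hu₁, hcorr₁, hval₁⟩ := t₁.exists_translation hφ.1 hs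
    obtain ⟨u₂, corr₂, hu₂, hcorr₂, hval₂⟩ := t₂.exists_translation hφ.2 hs
    refine ⟨.ltAdd corr₂ corr₁ u₁ u₂, TLFormula.depth_ltAdd_le
      (fun χ hχ => (hcorr₂ χ hχ).trans (le_max_right _ _))
      (fun χ hχ => (hcorr₁ χ hχ).trans (le_max_left _ _))
      (hu₁.trans (le_max_left _ _)) (hu₂.trans (le_max_right _ _)), fun w q hq => ?_⟩
    rw [YFormula.sat, TLFormula.sat_ltAdd, ← hval₁ w q hq, ← hval₂ w q hq, decide_eq_decide]
    omega
  | not φ =>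
    obtain ⟨T, hT, hsat⟩ := φ.exists_translation hφ hs
    exact ⟨.not T, hT, fun w q hq => by rw [YFormula.sat, TLFormula.sat, hsat w q hq]⟩
  | and φ₁ φ₂ =>
    obtain ⟨T₁, hT₁, hsat₁⟩ := φ₁.exists_translation hφ.1 hs
    obtain ⟨T₂, hT₂, hsat₂⟩ := φ₂.exists_translation hφ.2 hs
    exact ⟨.and T₁ T₂, max_le_max hT₁ hT₂, fun w q hq => by
      rw [YFormula.sat, TLFormula.sat, hsat₁ w q hq, hsat₂ w q hq]⟩

theorem YTerm.exists_translation (t : YTerm (Option σ)) {c s : ℕ} (ht : t.Fits x c)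
    (hs : s < x) :
    ∃ (u : TLTerm σ) (corr : List (TLFormula σ)), u.depth ≤ t.depth ∧
      (∀ χ ∈ corr, χ.depth ≤ t.depth) ∧ ∀ w : List σ, ∀ q < w.length,
        t.val (fembed x w) ((q + 1) * x + s - c) + corr.countP (·.sat w q) = u.val w q := by
  cases t with
  | countL χ => exact YTerm.exists_translation_countL ht.1 hs fun s' hs' =>
    χ.exists_translation ht.2 hs'
  | add t₁ t₂ =>
    obtain ⟨u₁, corr₁, hu₁, hcorr₁, hval₁⟩ := t₁.exists_translation ht.1 hs
    obtain ⟨u₂, corr₂, hu₂, hcorr₂, hval₂⟩ := t₂.exists_translation ht.2 hs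
    refine ⟨.add u₁ u₂, corr₁ ++ corr₂, max_le_max hu₁ hu₂, fun χ hχ => ?_, fun w q hq => ?_⟩
    · rcases List.mem_append.mp hχ with h | h
      · exact (hcorr₁ χ h).trans (le_max_left _ _)
      · exact (hcorr₂ χ h).trans (le_max_right _ _)
    · rw [YTerm.val, TLTerm.val, List.countP_append, ← hval₁ w q hq, ← hval₂ w q hq]
      ring
  | one => exact ⟨.one, [], le_rfl, by simp, fun _ _ _ => by simp [YTerm.val, TLTerm.val]⟩

end

end Translation

/-- For every TL[#←,Y,MOD] formula `φ` of depth at most `k` over the alphabet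
`Σ ∪ {e}`, there are an integer `x ≥ 1` and a TL[#←] formula `φ'` of depth at most `k`
over `Σ` such that for all nonempty `w ∈ Σ*`, `f(w) ⊨ φ` iff `w ⊨ φ'`. -/
theorem stmt17 (σ : Type) [Fintype σ] [DecidableEq σ] (k : ℕ)
    (φ : YFormula (Option σ)) (hφ : φ.depth ≤ k) :
    ∃ x : ℕ, 1 ≤ x ∧ ∃ φ' : TLFormula σ, φ'.depth ≤ k ∧
      ∀ w : List σ, w ≠ [] →
        (YFormula.sat φ (fembed x w) ((fembed x w).length - 1) = true ↔
          TLFormula.sat φ' w (w.length - 1) = true) := by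
  obtain ⟨x, hx, hfits⟩ := (φ.holdsForLargeMultiples_fits 0).exists_pos
  obtain ⟨T, hT, hsat⟩ := φ.exists_translation hfits (Nat.sub_lt hx one_pos)
  refine ⟨x, hx, T, hT.trans hφ, fun w hw => ?_⟩
  have hn : 0 < w.length := List.length_pos_iff.mpr hw
  have hlast : (fembed x w).length - 1 = (w.length - 1 + 1) * x + (x - 1) - 0 := by
    rw [length_fembed w hx, Nat.sub_add_cancel hn, add_one_mul]
    omega
  rw [hlast, hsat w _ (by omega)]
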